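/- arXiv:2109.00726 — 2 statements merged into one kernel-verified Lean document; each statement's English description precedes it below -/
import Mathlib

section
/- Let K be a field, d ≥ 1 and ℓ ≥ 1 integers, and let R = K[[x_1, …, x_d, y_1, …, y_ℓ]]/[(x_1, …, x_d)(y_1, …, y_ℓ) + (y_1, …, y_ℓ)^2] with maximal ideal m. Then for all n ≥ 1, ℓ_R(R/m^{n+1}) = binom(n+d, d) + ℓ. -/
open IsLocalRing Submodule

/-- The colon submodule `(N :_M J) = {x ∈ M ∣ J x ⊆ N}`. -/
def Submodule.colonBy {R M : Type*} [CommRing R] [AddCommGroup M] [Module R M]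
    (N : Submodule R M) (J : Ideal R) : Submodule R M where
  carrier := {x | ∀ r ∈ J, r • x ∈ N}
  add_mem' := fun {a b} ha hb r hr => by
    rw [smul_add]; exact N.add_mem (ha r hr) (hb r hr)
  zero_mem' := fun r hr => by rw [smul_zero]; exact N.zero_mem
  smul_mem' := fun c {x} hx r hr => by
    rw [smul_comm]; exact N.smul_mem c (hx r hr)

/-- The length of a module: the height of `⊤` in its lattice of submodules. -/
noncomputable def moduleLength (R M : Type*) [Ring R] [AddCommGroup M] [Module R M] : ℕ∞ :=
  Order.height (⊤ : Submodule R M)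

set_option synthInstance.maxHeartbeats 800000
set_option maxHeartbeats 1600000


section KeyLemma
open Submodule Module

universe u v

variable {K : Type u} {R : Type v} [Field K] [CommRing R] [Algebra K R]

/-- Turn a `K`-subspace containing `m • ⊤` into an `R`-submodule. -/
def toRSub {M : Type*} [AddCommGroup M] [Module R M] [Module K M] [IsScalarTower K R M]
    (m : Ideal R) (hres : ∀ r : R, ∃ c : K, r - algebraMap K R c ∈ m)
    (N : Submodule K M) (hN : Submodule.restrictScalars K (m • (⊤ : Submodule R M)) ≤ N) :
    Submodule R M where
  carrier := N
  add_mem' := N.add_mem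
  zero_mem' := N.zero_mem
  smul_mem' := fun r x hx => by
    obtain ⟨c, hc⟩ := hres r
    have h1 : r • x = (r - algebraMap K R c) • x + c • x := by
      rw [sub_smul, algebraMap_smul, sub_add_cancel]
    rw [h1]
    exact N.add_mem (hN (by simpa using Submodule.smul_mem_smul hc Submodule.mem_top))
      (N.smul_mem c hx)

lemma exists_chain (m : Ideal R) (hres : ∀ r : R, ∃ c : K, r - algebraMap K R c ∈ m) (t : ℕ) :
    ∀ (n : ℕ) (M : Type v) [AddCommGroup M] [Module R M] [Module K M] [IsScalarTower K R M]
      [FiniteDimensional K M],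
      (∀ r ∈ m ^ t, ∀ x : M, r • x = 0) → finrank K M = n →
      ∃ p : LTSeries (Submodule R M), p.last = ⊤ ∧ p.length = n := by
  intro n
  induction n with
  | zero =>
    intro M _ _ _ _ _ _ _
    exact ⟨RelSeries.singleton _ ⊤, rfl, rfl⟩
  | succ n ih =>
    intro M _ _ _ _ _ hann hrank
    have hnt : Nontrivial M := Module.nontrivial_of_finrank_pos (R := K) (by omega)
    -- m • ⊤ is a proper submodule
    have hbot : m ^ t • (⊤ : Submodule R M) = ⊥ := by
      apply le_bot_iff.mp
      exact Submodule.smul_le.mpr fun r hr x _ => by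
        rw [hann r hr x]; exact Submodule.zero_mem ⊥
    have hWproper : (Submodule.restrictScalars K (m • (⊤ : Submodule R M))) < ⊤ := by
      rcases lt_or_eq_of_le (le_top : Submodule.restrictScalars K (m • (⊤ : Submodule R M)) ≤ ⊤)
        with h | h
      · exact h
      exfalso
      have htop : m • (⊤ : Submodule R M) = ⊤ := by
        have := Submodule.restrictScalars_injective K R M
          (h.trans (Submodule.restrictScalars_top (S := K) (R := R) (M := M)).symm)
        exact this
      have hpow : ∀ k : ℕ, m ^ k • (⊤ : Submodule R M) = ⊤ := by
        intro k
        induction k with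
        | zero => simp
        | succ k ihk => rw [pow_succ, ← smul_eq_mul, Submodule.smul_assoc, htop, ihk]
      have := hpow t
      rw [hbot] at this
      obtain ⟨x, y, hxy⟩ := hnt
      apply hxy
      have hx : x ∈ (⊥ : Submodule R M) := this ▸ Submodule.mem_top
      have hy : y ∈ (⊥ : Submodule R M) := this ▸ Submodule.mem_top
      simp only [Submodule.mem_bot] at hx hy
      rw [hx, hy]
    -- find a hyperplane containing it
    obtain ⟨f, hf0, hfmap⟩ := Submodule.exists_dual_map_eq_bot_of_lt_top hWproper inferInstance
    have hrangef : finrank K (LinearMap.range f) = 1 := by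
      have h1 : finrank K (LinearMap.range f) ≤ 1 := by
        simpa using (LinearMap.range f).finrank_le
      have h2 : 0 < finrank K (LinearMap.range f) := by
        rw [Module.finrank_pos_iff]
        rcases DFunLike.ne_iff.mp hf0 with ⟨x, hx⟩
        exact nontrivial_of_ne ⟨f x, LinearMap.mem_range_self f x⟩ 0
          (by simpa using hx)
      omega
    have hNrank : finrank K (LinearMap.ker f) = n := by
      have := LinearMap.finrank_range_add_finrank_ker f
      rw [hrangef, hrank] at this
      omega
    set N : Submodule K M := LinearMap.ker f with hNdef
    have hWN : Submodule.restrictScalars K (m • (⊤ : Submodule R M)) ≤ N := by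
      intro x hx
      have : f x ∈ Submodule.map f (Submodule.restrictScalars K (m • (⊤ : Submodule R M))) :=
        Submodule.mem_map_of_mem hx
      rw [hfmap] at this
      exact LinearMap.mem_ker.mpr (by simpa using this)
    set N' : Submodule R M := toRSub m hres N hWN with hN'def
    have hmemN' : ∀ x : M, x ∈ N' ↔ x ∈ N := fun x => Iff.rfl
    -- N' as a module
    have heq : Submodule.restrictScalars K N' = N := by
      ext x; exact hmemN' x
    let eqv : (Submodule.restrictScalars K N') ≃ₗ[K] N' :=
      { toFun := fun x => ⟨x.1, x.2⟩
        invFun := fun x => ⟨x.1, x.2⟩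
        map_add' := fun _ _ => rfl
        map_smul' := fun _ _ => rfl
        left_inv := fun _ => rfl
        right_inv := fun _ => rfl }
    have hfd : FiniteDimensional K N' := Module.Finite.equiv eqv
    have hrk : finrank K N' = n := by
      rw [← LinearEquiv.finrank_eq eqv, heq, hNrank]
    have hannN' : ∀ r ∈ m ^ t, ∀ x : N', r • x = 0 := by
      intro r hr x
      ext
      simpa using hann r hr x
    obtain ⟨p, hplast, hplen⟩ := ih N' hannN' hrk
    have hstrict : StrictMono (Submodule.map N'.subtype) :=
      Submodule.map_strictMono_of_injective (Submodule.injective_subtype N')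
    have hN'top : N' < ⊤ := by
      rcases lt_or_eq_of_le (le_top : N' ≤ ⊤) with h | h
      · exact h
      exfalso
      have : N = ⊤ := by
        rw [eq_top_iff]
        intro x _
        rw [← hmemN' x, h]
        trivial
      rw [this] at hNrank
      rw [finrank_top] at hNrank
      omega
    refine ⟨(p.map _ hstrict).snoc ⊤ ?_, RelSeries.last_snoc _ _ _, by
      simp [RelSeries.snoc, hplen, LTSeries.map]⟩
    show (p.map _ hstrict).last < ⊤
    rw [LTSeries.last_map, hplast]
    simpa [Submodule.map_subtype_top] using hN'top
  
end KeyLemma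

section KeyLemma2
open Submodule Module
variable {K : Type u} {R : Type v} [Field K] [CommRing R] [Algebra K R]

lemma height_top_eq_finrank (m : Ideal R)
    (hres : ∀ r : R, ∃ c : K, r - algebraMap K R c ∈ m) (t : ℕ)
    (M : Type v) [AddCommGroup M] [Module R M] [Module K M] [IsScalarTower K R M]
    [FiniteDimensional K M] (hann : ∀ r ∈ m ^ t, ∀ x : M, r • x = 0) :
    Order.height (⊤ : Submodule R M) = (finrank K M : ℕ∞) := by
  apply le_antisymm
  · apply Order.height_le
    intro p hp
    have hrs : StrictMono (fun N : Submodule R M => Submodule.restrictScalars K N) :=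
      (Submodule.restrictScalarsEmbedding K R M).strictMono
    have hfr : StrictMono (fun W : Submodule K M => finrank K W) :=
      fun a b hab => Submodule.finrank_lt_finrank_of_lt hab
    let q := (p.map _ hrs).map _ hfr
    have h1 := Order.length_le_height_last (p := q)
    rw [Order.height_nat] at h1
    have h2 : q.last ≤ finrank K M := by
      rw [LTSeries.last_map, LTSeries.last_map]
      exact Submodule.finrank_le _
    have h3 : q.length = p.length := rfl
    calc (p.length : ℕ∞) = (q.length : ℕ∞) := by rw [h3]
      _ ≤ (q.last : ℕ∞) := h1
      _ ≤ (finrank K M : ℕ∞) := by exact_mod_cast h2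
  · obtain ⟨p, hlast, hlen⟩ := exists_chain m hres t (finrank K M) M hann rfl
    have := Order.length_le_height_last (p := p)
    rw [hlast, hlen] at this
    exact this

end KeyLemma2

section C3
open MvPowerSeries

variable {K : Type*} [Field K] {σ : Type*}

namespace Chunk3

/-- degree is additive -/
lemma degree_add (a b : σ →₀ ℕ) : (a + b).degree = a.degree + b.degree := by
  simp [Finsupp.degree_eq_weight_one, map_add]

lemma degree_single (i : σ) (k : ℕ) : (Finsupp.single i k).degree = k := by
  simp [Finsupp.degree_eq_weight_one, Finsupp.weight_apply, Finsupp.sum_single_index]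

lemma degree_mono {a b : σ →₀ ℕ} (h : a ≤ b) : a.degree ≤ b.degree := by
  have : b = a + (b - a) := (add_tsub_cancel_of_le h).symm
  rw [this, degree_add]; omega

lemma degree_strict_mono {a b : σ →₀ ℕ} (h : a ≤ b) (hne : a ≠ b) :
    a.degree < b.degree := by
  have hb : b = a + (b - a) := (add_tsub_cancel_of_le h).symm
  have hba : b - a ≠ 0 := by
    intro h0
    apply hne
    rw [hb, h0, add_zero]
  have := (Finsupp.degree_eq_zero_iff (b - a)).not.mpr hba
  rw [hb, degree_add]
  omega

lemma exists_le_degree (k : ℕ) (e : σ →₀ ℕ) (hk : k ≤ e.degree) :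
    ∃ g : σ →₀ ℕ, g ≤ e ∧ g.degree = k := by
  induction k with
  | zero => exact ⟨0, zero_le, map_zero _⟩
  | succ k ih =>
    obtain ⟨g', hg'le, hg'deg⟩ := ih (by omega)
    have hne : g' ≠ e := fun h => by rw [h] at hg'deg; omega
    have hex : ∃ i, g' i ≠ e i := by
      by_contra hc
      push_neg at hc
      exact hne (Finsupp.ext hc)
    obtain ⟨i, hi⟩ := hex
    have hlt : g' i < e i := lt_of_le_of_ne (Finsupp.le_def.mp hg'le i) hi
    refine ⟨g' + Finsupp.single i 1, ?_, by rw [degree_add, degree_single, hg'deg]⟩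
    rw [Finsupp.le_def]
    intro j
    rcases eq_or_ne j i with rfl | hji
    · simp only [Finsupp.add_apply, Finsupp.single_eq_same]
      omega
    · simp only [Finsupp.add_apply, Finsupp.single_eq_of_ne' (Ne.symm hji), add_zero]
      exact Finsupp.le_def.mp hg'le j

/-- The ideal of power series of order at least `k`. -/
def Tdeg (K : Type*) [Field K] (σ : Type*) (k : ℕ) : Ideal (MvPowerSeries σ K) where
  carrier := {f | ∀ e : σ →₀ ℕ, e.degree < k → coeff e f = 0}
  add_mem' := fun ha hb e he => by rw [map_add, ha e he, hb e he, add_zero]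
  zero_mem' := fun e _ => by simp
  smul_mem' := fun c f hf => by
    classical
    intro e he
    rw [smul_eq_mul, coeff_mul]
    apply Finset.sum_eq_zero
    rintro ⟨u, v⟩ huv
    have huve : u + v = e := Finset.HasAntidiagonal.mem_antidiagonal.mp huv
    have : v.degree < k := by
      have hve : v ≤ e := by
        rw [← huve]; exact le_add_self
      have := degree_mono hve
      omega
    rw [hf v this, mul_zero]

lemma mem_Tdeg {k : ℕ} {f : MvPowerSeries σ K} :
    f ∈ Tdeg K σ k ↔ ∀ e : σ →₀ ℕ, e.degree < k → coeff e f = 0 := Iff.rfl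

lemma Tdeg_mul_le (a b : ℕ) : Tdeg K σ a * Tdeg K σ b ≤ Tdeg K σ (a + b) := by
  classical
  rw [Ideal.mul_le]
  intro f hf g hg
  intro e he
  rw [coeff_mul]
  apply Finset.sum_eq_zero
  rintro ⟨u, v⟩ huv
  have huve : u + v = e := Finset.HasAntidiagonal.mem_antidiagonal.mp huv
  have hdeg : u.degree + v.degree = e.degree := by rw [← degree_add, huve]
  rcases lt_or_ge u.degree a with h | h
  · rw [hf u h, zero_mul]
  · have : v.degree < b := by omega
    rw [hg v this, mul_zero]

lemma X_mem_Tdeg_one (i : σ) : (X i : MvPowerSeries σ K) ∈ Tdeg K σ 1 := by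
  intro e he
  have : e = 0 := by
    have : e.degree = 0 := by omega
    exact (Finsupp.degree_eq_zero_iff e).mp this
  rw [this, coeff_zero_eq_constantCoeff_apply, constantCoeff_X]

lemma maximalIdeal_eq_Tdeg_one : IsLocalRing.maximalIdeal (MvPowerSeries σ K) = Tdeg K σ 1 := by
  ext f
  rw [IsLocalRing.mem_maximalIdeal, mem_nonunits_iff, isUnit_iff_constantCoeff,
    isUnit_iff_ne_zero, not_ne_iff]
  constructor
  · intro h e he
    have : e = 0 := (Finsupp.degree_eq_zero_iff e).mp (by omega)
    rw [this, coeff_zero_eq_constantCoeff_apply]; exact h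
  · intro h
    have := h 0 (by simp [map_zero])
    rwa [coeff_zero_eq_constantCoeff_apply] at this

lemma monomial_one_mem_pow (I : Ideal (MvPowerSeries σ K)) (hX : ∀ i, X i ∈ I) :
    ∀ (k : ℕ) (g : σ →₀ ℕ), g.degree = k → monomial g 1 ∈ I ^ k := by
  intro k
  induction k with
  | zero => intro g _; simp [Ideal.one_eq_top]
  | succ k ih =>
    intro g hg
    have hg0 : g ≠ 0 := by
      intro h; rw [h, map_zero] at hg; omega
    obtain ⟨i, hi⟩ : ∃ i, g i ≠ 0 := by
      by_contra hc
      push_neg at hc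
      exact hg0 (Finsupp.ext hc)
    have hle : Finsupp.single i 1 ≤ g := by
      rw [Finsupp.single_le_iff]; omega
    set g' := g - Finsupp.single i 1 with hg'
    have hsum : Finsupp.single i 1 + g' = g := add_tsub_cancel_of_le hle
    have hdeg' : g'.degree = k := by
      have := degree_add (Finsupp.single i 1) g'
      rw [hsum, degree_single, hg] at this
      omega
    have : monomial g (1 : K) = X i * monomial g' 1 := by
      rw [X, monomial_mul_monomial, hsum, one_mul]
    rw [this, pow_succ']
    exact Ideal.mul_mem_mul (hX i) (ih g' hdeg')

lemma mem_span_monomials (G : Finset (σ →₀ ℕ)) (f : MvPowerSeries σ K)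
    (h : ∀ e, coeff e f ≠ 0 → ∃ g ∈ G, g ≤ e) :
    f ∈ Ideal.span ((fun g => monomial g (1 : K)) '' (G : Set (σ →₀ ℕ))) := by
  classical
  set A : (σ →₀ ℕ) → (σ →₀ ℕ) :=
    fun e => if h : ∃ g ∈ G, g ≤ e then h.choose else 0 with hA
  set hm : (σ →₀ ℕ) → MvPowerSeries σ K := fun m =>
    (fun e => if (∃ g ∈ G, g ≤ e + m) ∧ A (e + m) = m then coeff (e + m) f else 0 :
      MvPowerSeries σ K) with hhm
  have key : f = ∑ m ∈ G, monomial m 1 * hm m := by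
    ext e
    rw [map_sum]
    by_cases hfe : coeff e f = 0
    · rw [hfe]
      symm
      apply Finset.sum_eq_zero
      intro m hmG
      rw [coeff_monomial_mul]
      split_ifs with hme
      · rw [one_mul, coeff_apply]
        simp only [hhm]
        rw [tsub_add_cancel_of_le hme]
        split_ifs with hc
        · exact hfe
        · rfl
      · rfl
    · have hexx : ∃ g ∈ G, g ≤ e := h e hfe
      have hAmem : A e ∈ G ∧ A e ≤ e := by
        rw [hA]
        simp only [hexx, dif_pos]
        exact ⟨hexx.choose_spec.1, hexx.choose_spec.2⟩
      symm
      rw [Finset.sum_eq_single (A e)]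
      · rw [coeff_monomial_mul, if_pos hAmem.2, one_mul, coeff_apply]
        simp only [hhm]
        rw [tsub_add_cancel_of_le hAmem.2]
        rw [if_pos ⟨hexx, rfl⟩]
      · intro m hmG hmne
        rw [coeff_monomial_mul]
        split_ifs with hme
        · rw [one_mul, coeff_apply]
          simp only [hhm]
          rw [tsub_add_cancel_of_le hme]
          rw [if_neg]
          rintro ⟨-, hc2⟩
          exact hmne hc2.symm
        · rfl
      · intro hne
        exact absurd hAmem.1 hne
  rw [key]
  apply Ideal.sum_mem
  intro m hmG
  apply Ideal.mul_mem_right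
  apply Ideal.subset_span
  exact ⟨m, hmG, rfl⟩

variable [Fintype σ]

noncomputable def Gdeg (σ : Type*) [Fintype σ] (k : ℕ) : Finset (σ →₀ ℕ) :=
  (Finsupp.finite_of_degree_le (σ := σ) k).toFinset.filter (fun g => g.degree = k)

lemma mem_Gdeg {k : ℕ} {g : σ →₀ ℕ} : g ∈ Gdeg σ k ↔ g.degree = k := by
  simp only [Gdeg, Finset.mem_filter, Set.Finite.mem_toFinset, Set.mem_setOf_eq,
    and_iff_right_iff_imp]
  omega

lemma Tdeg_le_pow (k : ℕ) : Tdeg K σ k ≤ (Tdeg K σ 1) ^ k := by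
  intro f hf
  have hmem := mem_span_monomials (Gdeg σ k) f (fun e he => by
    refine ⟨?_, ?_, ?_⟩
    case _ => exact (exists_le_degree k e (by
      by_contra hc
      exact he (hf e (by omega)))).choose
    all_goals {
      have hh := (exists_le_degree k e (by
        by_contra hc
        exact he (hf e (by omega)))).choose_spec
      first
      | exact mem_Gdeg.mpr hh.2
      | exact hh.1 })
  refine Ideal.span_le.mpr ?_ hmem
  rintro x ⟨g, hg, rfl⟩
  exact monomial_one_mem_pow _ X_mem_Tdeg_one k g (mem_Gdeg.mp hg)

omit [Fintype σ] in
lemma pow_le_Tdeg (k : ℕ) : (Tdeg K σ 1) ^ k ≤ Tdeg K σ k := by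
  induction k with
  | zero => intro f _ e he; omega
  | succ k ih =>
    calc (Tdeg K σ 1) ^ (k + 1) = (Tdeg K σ 1) ^ k * Tdeg K σ 1 := pow_succ _ _
    _ ≤ Tdeg K σ k * Tdeg K σ 1 := Ideal.mul_mono_left ih
    _ ≤ Tdeg K σ (k + 1) := Tdeg_mul_le k 1

lemma pow_Tdeg (k : ℕ) : (Tdeg K σ 1) ^ k = Tdeg K σ k :=
  le_antisymm (pow_le_Tdeg k) (Tdeg_le_pow k)

end Chunk3

end C3

section Specific
open MvPowerSeries Chunk3

variable {K : Type*} [Field K] {d l : ℕ}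

namespace Chunk4

/-- exponent supported on the `x` variables -/
def pureX {d l : ℕ} (e : Fin d ⊕ Fin l →₀ ℕ) : Prop := ∀ j : Fin l, e (Sum.inr j) = 0

/-- the "basis" exponents of the quotient -/
def Bpred (d l n : ℕ) (e : Fin d ⊕ Fin l →₀ ℕ) : Prop :=
  (pureX e ∧ e.degree ≤ n) ∨ ∃ j : Fin l, e = Finsupp.single (Sum.inr j) 1

lemma Bpred_downward {n : ℕ} {v e : Fin d ⊕ Fin l →₀ ℕ} (hve : v ≤ e)
    (he : Bpred d l n e) : Bpred d l n v := by
  rcases he with ⟨hpure, hdeg⟩ | ⟨j, rfl⟩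
  · left
    exact ⟨fun j => Nat.le_zero.mp ((Finsupp.le_def.mp hve (Sum.inr j)).trans
        (le_of_eq (hpure j))), (degree_mono hve).trans hdeg⟩
  · by_cases hv : v (Sum.inr j) = 0
    · left
      constructor
      · intro j'
        have := Finsupp.le_def.mp hve (Sum.inr j')
        rcases eq_or_ne j' j with rfl | hne
        · exact hv
        · rw [Finsupp.single_apply, if_neg (fun hc => hne (Sum.inr_injective hc).symm)] at this
          omega
      · have : v = 0 := by
          ext a
          have h2 := Finsupp.le_def.mp hve a
          rcases eq_or_ne a (Sum.inr j) with rfl | hne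
          · exact hv
          · simpa [Finsupp.single_apply, (Ne.symm hne)] using h2
        simp [this]
    · right
      refine ⟨j, ?_⟩
      ext a
      have h2 := Finsupp.le_def.mp hve a
      rcases eq_or_ne a (Sum.inr j) with rfl | hne
      · simp only [Finsupp.single_eq_same]
        have : v (Sum.inr j) ≤ 1 := by simpa using h2
        omega
      · simp only [Finsupp.single_apply] at h2 ⊢
        rw [if_neg (Ne.symm hne)] at h2 ⊢
        omega

/-- kernel of the coefficient map -/
def Qker (K : Type*) [Field K] (d l n : ℕ) : Ideal (MvPowerSeries (Fin d ⊕ Fin l) K) where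
  carrier := {f | ∀ e, Bpred d l n e → coeff e f = 0}
  add_mem' := fun ha hb e he => by rw [map_add, ha e he, hb e he, add_zero]
  zero_mem' := fun e _ => by simp
  smul_mem' := fun c f hf => by
    classical
    intro e he
    rw [smul_eq_mul, coeff_mul]
    apply Finset.sum_eq_zero
    rintro ⟨u, v⟩ huv
    have huve : u + v = e := Finset.HasAntidiagonal.mem_antidiagonal.mp huv
    have hve : v ≤ e := by rw [← huve]; exact le_add_self
    rw [hf v (Bpred_downward hve he), mul_zero]

lemma mem_Qker {n : ℕ} {f : MvPowerSeries (Fin d ⊕ Fin l) K} :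
    f ∈ Qker K d l n ↔ ∀ e, Bpred d l n e → coeff e f = 0 := Iff.rfl

/-- generator exponents of J -/
noncomputable def GJ (d l : ℕ) : Finset (Fin d ⊕ Fin l →₀ ℕ) :=
  Finset.image (fun p : (Fin d ⊕ Fin l) × Fin l =>
    Finsupp.single p.1 1 + Finsupp.single (Sum.inr p.2) 1) Finset.univ

lemma mem_GJ {g : Fin d ⊕ Fin l →₀ ℕ} :
    g ∈ GJ d l ↔ ∃ p : (Fin d ⊕ Fin l) × Fin l,
      Finsupp.single p.1 1 + Finsupp.single (Sum.inr p.2) 1 = g := by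
  simp [GJ]

lemma Jspan :
    (Ideal.span (Set.range fun i : Fin d =>
        (X (Sum.inl i) : MvPowerSeries (Fin d ⊕ Fin l) K)) *
      Ideal.span (Set.range fun j : Fin l =>
        (X (Sum.inr j) : MvPowerSeries (Fin d ⊕ Fin l) K)) +
      Ideal.span (Set.range fun j : Fin l =>
        (X (Sum.inr j) : MvPowerSeries (Fin d ⊕ Fin l) K)) ^ 2)
    = Ideal.span ((fun g => monomial g (1 : K)) '' (GJ d l : Set _)) := by
  have hXmul : ∀ (a b : Fin d ⊕ Fin l),
      (X a : MvPowerSeries (Fin d ⊕ Fin l) K) * X b =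
        monomial (Finsupp.single a 1 + Finsupp.single b 1) 1 := by
    intro a b
    rw [X, X, monomial_mul_monomial, one_mul]
  apply le_antisymm
  · rw [Submodule.add_eq_sup]
    apply sup_le
    · rw [Ideal.span_mul_span']
      rw [Ideal.span_le]
      rintro x hx
      rcases Set.mem_mul.mp hx with ⟨a, ha, b, hb, rfl⟩
      obtain ⟨i, rfl⟩ := ha
      obtain ⟨j, rfl⟩ := hb
      rw [hXmul]
      apply Ideal.subset_span
      exact ⟨_, mem_GJ.mpr ⟨(Sum.inl i, j), rfl⟩, rfl⟩
    · rw [sq, Ideal.span_mul_span', Ideal.span_le]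
      rintro x hx
      rcases Set.mem_mul.mp hx with ⟨a, ha, b, hb, rfl⟩
      obtain ⟨j', rfl⟩ := ha
      obtain ⟨j, rfl⟩ := hb
      rw [hXmul]
      apply Ideal.subset_span
      exact ⟨_, mem_GJ.mpr ⟨(Sum.inr j', j), rfl⟩, rfl⟩
  · rw [Ideal.span_le]
    rintro x ⟨g, hg, rfl⟩
    obtain ⟨⟨a, j⟩, rfl⟩ := mem_GJ.mp hg
    show (monomial (Finsupp.single a 1 + Finsupp.single (Sum.inr j) 1)) 1 ∈ _
    rw [← hXmul]
    rw [Submodule.add_eq_sup]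
    match a with
    | Sum.inl i =>
      apply Submodule.mem_sup_left
      exact Ideal.mul_mem_mul (Ideal.subset_span ⟨i, rfl⟩) (Ideal.subset_span ⟨j, rfl⟩)
    | Sum.inr j' =>
      apply Submodule.mem_sup_right
      rw [sq]
      exact Ideal.mul_mem_mul (Ideal.subset_span ⟨j', rfl⟩) (Ideal.subset_span ⟨j, rfl⟩)

lemma not_Bpred_GJ {n : ℕ} {g : Fin d ⊕ Fin l →₀ ℕ} (hg : g ∈ GJ d l) :
    ¬ Bpred d l n g := by
  obtain ⟨⟨a, j⟩, rfl⟩ := mem_GJ.mp hg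
  rintro (⟨hpure, -⟩ | ⟨j', hj'⟩)
  · have := hpure j
    simp only [Finsupp.add_apply, Finsupp.single_apply, Finsupp.single_eq_same] at this
    split_ifs at this <;> omega
  · have hdeg := congrArg Finsupp.degree hj'
    rw [degree_add, degree_single, degree_single, degree_single] at hdeg
    omega

lemma Qker_eq (n : ℕ) (hn : 1 ≤ n) :
    Ideal.span ((fun g => monomial g (1 : K)) '' (GJ d l : Set _)) ⊔
      Tdeg K (Fin d ⊕ Fin l) (n + 1) = Qker K d l n := by
  apply le_antisymm
  · apply sup_le
    · rw [Ideal.span_le]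
      rintro x ⟨g, hg, rfl⟩
      intro e he
      rw [coeff_monomial]
      split_ifs with hc
      · exact absurd (hc ▸ he) (not_Bpred_GJ hg)
      · rfl
    · intro f hf e he
      apply hf
      rcases he with ⟨-, hdeg⟩ | ⟨j, rfl⟩
      · omega
      · rw [degree_single]; omega
  · intro f hf
    classical
    set f₁ : MvPowerSeries (Fin d ⊕ Fin l) K :=
      (fun e => if pureX e then 0 else f e : MvPowerSeries (Fin d ⊕ Fin l) K) with hf₁
    have hcoe₁ : ∀ e, coeff e f₁ = if pureX e then 0 else coeff e f := fun e => rfl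
    have hmem₁ : f₁ ∈ Ideal.span ((fun g => monomial g (1 : K)) '' (GJ d l : Set _)) := by
      apply mem_span_monomials
      intro e he
      rw [hcoe₁] at he
      split_ifs at he with hpure
      · exact absurd rfl he
      have hnB : ¬ Bpred d l n e := fun hB => he (hf e hB)
      have hnsingle : ¬ ∃ j : Fin l, e = Finsupp.single (Sum.inr j) 1 := fun h => hnB (Or.inr h)
      unfold pureX at hpure
      push_neg at hpure
      obtain ⟨j₀, hj₀⟩ := hpure
      by_cases h2 : 2 ≤ e (Sum.inr j₀)
      · refine ⟨_, mem_GJ.mpr ⟨(Sum.inr j₀, j₀), rfl⟩, ?_⟩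
        rw [Finsupp.le_def]
        intro a
        rcases eq_or_ne a (Sum.inr j₀) with rfl | hne
        · simp only [Finsupp.add_apply, Finsupp.single_eq_same]
          omega
        · simp [Finsupp.single_apply, Ne.symm hne]
      · have h1 : e (Sum.inr j₀) = 1 := by omega
        have hex : ∃ a, a ≠ Sum.inr j₀ ∧ e a ≠ 0 := by
          by_contra hc
          push_neg at hc
          apply hnsingle
          refine ⟨j₀, ?_⟩
          ext a
          rcases eq_or_ne a (Sum.inr j₀) with rfl | hne
          · simp [h1]
          · rw [hc a hne]
            simp [Finsupp.single_apply, Ne.symm hne]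
        obtain ⟨a, hane, ha⟩ := hex
        refine ⟨_, mem_GJ.mpr ⟨(a, j₀), rfl⟩, ?_⟩
        rw [Finsupp.le_def]
        intro b
        rcases eq_or_ne b a with rfl | hba
        · have : Finsupp.single (Sum.inr j₀) (1:ℕ) b = 0 := by
            simp [Finsupp.single_apply, Ne.symm hane]
          simp only [Finsupp.add_apply, Finsupp.single_eq_same, this]
          omega
        · rcases eq_or_ne b (Sum.inr j₀) with rfl | hbj
          · have : Finsupp.single a (1:ℕ) (Sum.inr j₀) = 0 := by
              simp [Finsupp.single_apply, hane]
            simp only [Finsupp.add_apply, this, Finsupp.single_eq_same]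
            omega
          · simp [Finsupp.single_apply, Ne.symm hba, Ne.symm hbj]
    have hmem₂ : f - f₁ ∈ Tdeg K (Fin d ⊕ Fin l) (n + 1) := by
      intro e he
      rw [map_sub, hcoe₁]
      split_ifs with hpure
      · rw [sub_zero]
        apply hf
        exact Or.inl ⟨hpure, by omega⟩
      · rw [sub_self]
    have : f = f₁ + (f - f₁) := by ring
    rw [this]
    exact Submodule.add_mem _ (Submodule.mem_sup_left hmem₁) (Submodule.mem_sup_right hmem₂)

end Chunk4
end Specific

section Counting
open MvPowerSeries Chunk3 Chunk4

variable {K : Type*} [Field K]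

namespace Chunk4

lemma degree_eq_sum_univ {σ : Type*} [Fintype σ] (e : σ →₀ ℕ) :
    e.degree = ∑ a : σ, e a := by
  rw [Finsupp.degree]
  apply Finset.sum_subset (Finset.subset_univ _)
  intro x _ hx
  exact Finsupp.notMem_support_iff.mp hx

noncomputable def E1 (d l n : ℕ) :
    {e : Fin d ⊕ Fin l →₀ ℕ // pureX e ∧ e.degree ≤ n} ≃
      {β : Fin (d + 1) →₀ ℕ // β.degree = n} where
  toFun e := ⟨Finsupp.equivFunOnFinite.symm
      (Fin.snoc (fun i => e.1 (Sum.inl i)) (n - e.1.degree)), by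
    obtain ⟨e, hpure, hdeg⟩ := e
    have h0 : ∀ j, e (Sum.inr j) = 0 := hpure
    have hsum : e.degree = ∑ i : Fin d, e (Sum.inl i) := by
      rw [degree_eq_sum_univ, Fintype.sum_sum_type]
      simp [h0]
    rw [degree_eq_sum_univ, Fin.sum_univ_castSucc]
    simp only [Finsupp.coe_equivFunOnFinite_symm, Fin.snoc_castSucc, Fin.snoc_last]
    omega⟩
  invFun β := ⟨Finsupp.equivFunOnFinite.symm
      (Sum.elim (fun i => β.1 (Fin.castSucc i)) (fun _ => 0)), by
    obtain ⟨β, hdeg⟩ := β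
    constructor
    · intro j
      simp
    · rw [degree_eq_sum_univ, Fintype.sum_sum_type]
      simp only [Finsupp.coe_equivFunOnFinite_symm, Sum.elim_inl, Sum.elim_inr,
        Finset.sum_const_zero, add_zero]
      rw [degree_eq_sum_univ, Fin.sum_univ_castSucc] at hdeg
      omega⟩
  left_inv := by
    rintro ⟨e, hpure, hdeg⟩
    ext a
    match a with
    | Sum.inl i => simp
    | Sum.inr j => simp [hpure j]
  right_inv := by
    rintro ⟨β, hdeg⟩
    ext k
    refine Fin.lastCases ?_ ?_ k
    · have h1 : (Finsupp.equivFunOnFinite.symm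
          (Sum.elim (fun i => β (Fin.castSucc i)) (fun _ : Fin l => 0)) :
            Fin d ⊕ Fin l →₀ ℕ).degree = ∑ i : Fin d, β (Fin.castSucc i) := by
        rw [degree_eq_sum_univ, Fintype.sum_sum_type]
        simp
      rw [degree_eq_sum_univ, Fin.sum_univ_castSucc] at hdeg
      simp only [Finsupp.coe_equivFunOnFinite_symm, Fin.snoc_last, h1]
      omega
    · intro i
      simp
  
noncomputable def E2 (m n : ℕ) : {β : Fin m →₀ ℕ // β.degree = n} ≃ Sym (Fin m) n where
  toFun β := ⟨Finsupp.toMultiset β.1, by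
    rw [Finsupp.card_toMultiset]
    exact β.2⟩
  invFun s := ⟨Multiset.toFinsupp s.1, by
    have : Finsupp.degree (Multiset.toFinsupp s.1) =
        Multiset.card (Finsupp.toMultiset (Multiset.toFinsupp s.1)) := by
      rw [Finsupp.card_toMultiset]; rfl
    rw [this, Multiset.toFinsupp_toMultiset]
    exact s.2⟩
  left_inv β := by
    ext1
    exact Finsupp.toMultiset_toFinsupp _
  right_inv s := by
    ext1
    exact Multiset.toFinsupp_toMultiset _

noncomputable def Eyl (d l n : ℕ) :
    Fin l ≃ {e : Fin d ⊕ Fin l →₀ ℕ // ∃ j : Fin l, e = Finsupp.single (Sum.inr j) 1} := by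
  apply Equiv.ofBijective (fun j => ⟨Finsupp.single (Sum.inr j) 1, ⟨j, rfl⟩⟩)
  constructor
  · intro j j' h
    have h' : (Finsupp.single (Sum.inr j) 1 : Fin d ⊕ Fin l →₀ ℕ) =
        Finsupp.single (Sum.inr j') 1 := congrArg Subtype.val h
    exact Sum.inr_injective (Finsupp.single_left_injective one_ne_zero h')
  · rintro ⟨e, j, rfl⟩
    exact ⟨j, rfl⟩

lemma card_B (d l n : ℕ) :
    Nat.card {e : Fin d ⊕ Fin l →₀ ℕ // Bpred d l n e} = (n + d).choose d + l := by
  classical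
  have hdisj : Disjoint (fun e : Fin d ⊕ Fin l →₀ ℕ => pureX e ∧ e.degree ≤ n)
      (fun e => ∃ j : Fin l, e = Finsupp.single (Sum.inr j) 1) := by
    rw [Pi.disjoint_iff]
    intro e
    rw [Prop.disjoint_iff]
    rintro ⟨⟨hpure, -⟩, j, rfl⟩
    have := hpure j
    simp at this
  have hequiv := subtypeOrEquiv _ _ hdisj
  have h1 : Nat.card {e : Fin d ⊕ Fin l →₀ ℕ // pureX e ∧ e.degree ≤ n} =
      (n + d).choose d := by
    rw [Nat.card_congr ((E1 d l n).trans (E2 (d + 1) n)), Nat.card_eq_fintype_card,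
      Sym.card_sym_eq_choose, Fintype.card_fin]
    have h3 : d + 1 + n - 1 = n + d := by omega
    rw [h3, ← Nat.choose_symm (Nat.le_add_right n d)]
    congr 1
    omega
  have h2 : Nat.card {e : Fin d ⊕ Fin l →₀ ℕ // ∃ j : Fin l, e = Finsupp.single (Sum.inr j) 1}
      = l := by
    rw [← Nat.card_congr (Eyl d l n), Nat.card_eq_fintype_card, Fintype.card_fin]
  have hfin1 : Finite {e : Fin d ⊕ Fin l →₀ ℕ // pureX e ∧ e.degree ≤ n} :=
    Finite.of_equiv _ ((E1 d l n).trans (E2 (d + 1) n)).symm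
  have hfin2 : Finite {e : Fin d ⊕ Fin l →₀ ℕ // ∃ j : Fin l, e = Finsupp.single (Sum.inr j) 1} :=
    Finite.of_equiv _ (Eyl d l n)
  have : Nat.card {e : Fin d ⊕ Fin l →₀ ℕ // Bpred d l n e} =
      Nat.card ({e : Fin d ⊕ Fin l →₀ ℕ // pureX e ∧ e.degree ≤ n} ⊕
        {e : Fin d ⊕ Fin l →₀ ℕ // ∃ j : Fin l, e = Finsupp.single (Sum.inr j) 1}) :=
    Nat.card_congr hequiv
  rw [this, Nat.card_sum, h1, h2]

lemma finite_B (d l n : ℕ) : Finite {e : Fin d ⊕ Fin l →₀ ℕ // Bpred d l n e} := by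
  classical
  have hfin1 : Finite {e : Fin d ⊕ Fin l →₀ ℕ // pureX e ∧ e.degree ≤ n} :=
    Finite.of_equiv _ ((E1 d l n).trans (E2 (d + 1) n)).symm
  have hfin2 : Finite {e : Fin d ⊕ Fin l →₀ ℕ // ∃ j : Fin l, e = Finsupp.single (Sum.inr j) 1} :=
    Finite.of_equiv _ (Eyl d l n)
  have hdisj : Disjoint (fun e : Fin d ⊕ Fin l →₀ ℕ => pureX e ∧ e.degree ≤ n)
      (fun e => ∃ j : Fin l, e = Finsupp.single (Sum.inr j) 1) := by
    rw [Pi.disjoint_iff]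
    intro e
    rw [Prop.disjoint_iff]
    rintro ⟨⟨hpure, -⟩, j, rfl⟩
    have := hpure j
    simp at this
  exact Finite.of_equiv _ (subtypeOrEquiv _ _ hdisj).symm

open scoped Classical

/-- linear section -/
noncomputable def secl (K : Type*) [Field K] (d l n : ℕ) :
    ({e : Fin d ⊕ Fin l →₀ ℕ // Bpred d l n e} → K) →ₗ[K]
      MvPowerSeries (Fin d ⊕ Fin l) K where
  toFun v := fun e => if h : Bpred d l n e then v ⟨e, h⟩ else 0
  map_add' v w := by
    apply MvPowerSeries.ext
    intro e
    show (if h : Bpred d l n e then (v + w) ⟨e, h⟩ else 0) =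
      (if h : Bpred d l n e then v ⟨e, h⟩ else 0) + (if h : Bpred d l n e then w ⟨e, h⟩ else 0)
    by_cases h : Bpred d l n e <;> simp [h]
  map_smul' c v := by
    apply MvPowerSeries.ext
    intro e
    show (if h : Bpred d l n e then (c • v) ⟨e, h⟩ else 0) =
      c • (if h : Bpred d l n e then v ⟨e, h⟩ else 0)
    by_cases h : Bpred d l n e <;> simp [h]

lemma coeff_secl {d l n : ℕ} (v : {e : Fin d ⊕ Fin l →₀ ℕ // Bpred d l n e} → K)
    (b : {e : Fin d ⊕ Fin l →₀ ℕ // Bpred d l n e}) :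
    coeff b.1 (secl K d l n v) = v b := by
  rw [coeff_apply]
  show (if h : Bpred d l n b.1 then v ⟨b.1, h⟩ else 0) = v b
  rw [dif_pos b.2]

noncomputable def quotEquiv (K : Type*) [Field K] (d l n : ℕ) :
    ({e : Fin d ⊕ Fin l →₀ ℕ // Bpred d l n e} → K) ≃ₗ[K]
      (MvPowerSeries (Fin d ⊕ Fin l) K ⧸ Qker K d l n) := by
  apply LinearEquiv.ofBijective
    ((Ideal.Quotient.mkₐ K (Qker K d l n)).toLinearMap ∘ₗ secl K d l n)
  constructor
  · intro v w h
    simp only [LinearMap.coe_comp, Function.comp_apply, AlgHom.toLinearMap_apply,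
      Ideal.Quotient.mkₐ_eq_mk] at h
    rw [Ideal.Quotient.mk_eq_mk_iff_sub_mem] at h
    funext b
    have := h b.1 b.2
    rw [map_sub, coeff_secl, coeff_secl] at this
    exact sub_eq_zero.mp this
  · intro x
    obtain ⟨f, rfl⟩ := Ideal.Quotient.mk_surjective x
    refine ⟨fun b => coeff b.1 f, ?_⟩
    simp only [LinearMap.coe_comp, Function.comp_apply, AlgHom.toLinearMap_apply,
      Ideal.Quotient.mkₐ_eq_mk]
    rw [Ideal.Quotient.mk_eq_mk_iff_sub_mem]
    intro e he
    rw [map_sub]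
    have := coeff_secl (K := K) (fun b => coeff b.1 f) ⟨e, he⟩
    rw [this]
    simp

end Chunk4
end Counting

/-- For `R = K⟦x₁,…,x_d,y₁,…,y_ℓ⟧/[(x)(y)+(y)²]` with maximal ideal `𝔪`,
`ℓ_R(R/𝔪^{n+1}) = C(n+d,d) + ℓ` for all `n ≥ 1`. -/
theorem statement14 {K : Type*} [Field K] (d l : ℕ) (hd : 1 ≤ d) (hl : 1 ≤ l)
    (J : Ideal (MvPowerSeries (Fin d ⊕ Fin l) K))
    (hJ : J = Ideal.span (Set.range fun i : Fin d =>
        (MvPowerSeries.X (Sum.inl i) : MvPowerSeries (Fin d ⊕ Fin l) K)) *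
      Ideal.span (Set.range fun j : Fin l =>
        (MvPowerSeries.X (Sum.inr j) : MvPowerSeries (Fin d ⊕ Fin l) K)) +
      Ideal.span (Set.range fun j : Fin l =>
        (MvPowerSeries.X (Sum.inr j) : MvPowerSeries (Fin d ⊕ Fin l) K)) ^ 2)
    (m : Ideal (MvPowerSeries (Fin d ⊕ Fin l) K ⧸ J)) (hm : m.IsMaximal) :
    ∀ n : ℕ, 1 ≤ n →
      moduleLength (MvPowerSeries (Fin d ⊕ Fin l) K ⧸ J)
          ((MvPowerSeries (Fin d ⊕ Fin l) K ⧸ J) ⧸ m ^ (n + 1))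
        = (((n + d).choose d + l : ℕ) : ℕ∞) := by
  intro n hn
  classical
  have hJspan : J = Ideal.span
      ((fun g => MvPowerSeries.monomial g (1 : K)) '' (Chunk4.GJ d l : Set _)) := by
    rw [hJ]; exact Chunk4.Jspan
  have hJle : J ≤ IsLocalRing.maximalIdeal (MvPowerSeries (Fin d ⊕ Fin l) K) := by
    rw [hJspan, Chunk3.maximalIdeal_eq_Tdeg_one, Ideal.span_le]
    rintro x ⟨g, hg, rfl⟩
    intro e he
    rw [MvPowerSeries.coeff_monomial]
    split_ifs with hc
    · exfalso
      obtain ⟨p, hp⟩ := Chunk4.mem_GJ.mp hg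
      rw [hc, ← hp, Chunk3.degree_add, Chunk3.degree_single, Chunk3.degree_single] at he
      omega
    · rfl
  have hJne : J ≠ ⊤ := by
    intro h
    rw [h] at hJle
    exact (IsLocalRing.maximalIdeal.isMaximal _).ne_top (top_le_iff.mp hJle)
  haveI : Nontrivial (MvPowerSeries (Fin d ⊕ Fin l) K ⧸ J) := Ideal.Quotient.nontrivial_iff.mpr hJne
  haveI : IsLocalRing (MvPowerSeries (Fin d ⊕ Fin l) K ⧸ J) :=
    IsLocalRing.of_surjective' (Ideal.Quotient.mk J) Ideal.Quotient.mk_surjective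
  have hcomap : Ideal.comap (Ideal.Quotient.mk J) m
      = IsLocalRing.maximalIdeal (MvPowerSeries (Fin d ⊕ Fin l) K) := by
    haveI := hm
    exact IsLocalRing.eq_maximalIdeal
      (Ideal.comap_isMaximal_of_surjective _ Ideal.Quotient.mk_surjective)
  have hmmap : m = Ideal.map (Ideal.Quotient.mk J)
      (IsLocalRing.maximalIdeal (MvPowerSeries (Fin d ⊕ Fin l) K)) := by
    rw [← hcomap, Ideal.map_comap_of_surjective _ Ideal.Quotient.mk_surjective]
  have hpow : m ^ (n + 1) = Ideal.map (Ideal.Quotient.mk J)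
      (Chunk3.Tdeg K (Fin d ⊕ Fin l) (n + 1)) := by
    rw [hmmap, ← Ideal.map_pow, Chunk3.maximalIdeal_eq_Tdeg_one, Chunk3.pow_Tdeg]
  -- residues
  have hres : ∀ r : MvPowerSeries (Fin d ⊕ Fin l) K ⧸ J, ∃ c : K,
      r - algebraMap K _ c ∈ m := by
    intro r
    obtain ⟨f, rfl⟩ := Ideal.Quotient.mk_surjective r
    refine ⟨MvPowerSeries.constantCoeff f, ?_⟩
    rw [hmmap]
    have halg : algebraMap K (MvPowerSeries (Fin d ⊕ Fin l) K ⧸ J)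
          (MvPowerSeries.constantCoeff f)
        = Ideal.Quotient.mk J (algebraMap K (MvPowerSeries (Fin d ⊕ Fin l) K)
          (MvPowerSeries.constantCoeff f)) := by
      rw [← Ideal.Quotient.mkₐ_eq_mk (R₁ := K), AlgHom.commutes]
    rw [halg, ← map_sub]
    apply Ideal.mem_map_of_mem
    rw [Chunk3.maximalIdeal_eq_Tdeg_one]
    intro e he
    have he0 : e = 0 := (Finsupp.degree_eq_zero_iff e).mp (by omega)
    rw [he0, map_sub, MvPowerSeries.coeff_zero_eq_constantCoeff_apply,
      MvPowerSeries.coeff_zero_eq_constantCoeff_apply, ← MvPowerSeries.c_eq_algebraMap,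
      MvPowerSeries.constantCoeff_C, sub_self]
  -- annihilation
  have hann : ∀ r ∈ m ^ (n + 1),
      ∀ x : (MvPowerSeries (Fin d ⊕ Fin l) K ⧸ J) ⧸ m ^ (n + 1), r • x = 0 := by
    intro r hr x
    obtain ⟨y, rfl⟩ := Ideal.Quotient.mk_surjective x
    rw [← Ideal.Quotient.mk_eq_mk, ← Submodule.Quotient.mk_smul, smul_eq_mul]
    exact (Submodule.Quotient.mk_eq_zero _).mpr (Ideal.mul_mem_right y _ hr)
  -- the linear equivalence with the coefficient space
  have hQ : J ⊔ Chunk3.Tdeg K (Fin d ⊕ Fin l) (n + 1) = Chunk4.Qker K d l n := by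
    rw [hJspan]
    exact Chunk4.Qker_eq n hn
  have hpow' : m ^ (n + 1) = Ideal.map (Ideal.Quotient.mkₐ K J)
      (Chunk3.Tdeg K (Fin d ⊕ Fin l) (n + 1)) := hpow
  let eqA := DoubleQuot.quotQuotEquivQuotSupₐ K J (Chunk3.Tdeg K (Fin d ⊕ Fin l) (n + 1))
  let Efin : ((MvPowerSeries (Fin d ⊕ Fin l) K ⧸ J) ⧸ m ^ (n + 1)) ≃ₗ[K]
      ({e : Fin d ⊕ Fin l →₀ ℕ // Chunk4.Bpred d l n e} → K) :=
    (Ideal.quotientEquivAlgOfEq K hpow').toLinearEquiv.trans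
      (eqA.toLinearEquiv.trans
        ((Ideal.quotientEquivAlgOfEq K hQ).toLinearEquiv.trans
          (Chunk4.quotEquiv K d l n).symm))
  haveI : Finite {e : Fin d ⊕ Fin l →₀ ℕ // Chunk4.Bpred d l n e} := Chunk4.finite_B d l n
  haveI : Fintype {e : Fin d ⊕ Fin l →₀ ℕ // Chunk4.Bpred d l n e} := Fintype.ofFinite _
  haveI : FiniteDimensional K ((MvPowerSeries (Fin d ⊕ Fin l) K ⧸ J) ⧸ m ^ (n + 1)) :=
    Module.Finite.equiv Efin.symm
  have hfr : Module.finrank K ((MvPowerSeries (Fin d ⊕ Fin l) K ⧸ J) ⧸ m ^ (n + 1))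
      = (n + d).choose d + l := by
    rw [LinearEquiv.finrank_eq Efin, Module.finrank_pi, ← Nat.card_eq_fintype_card,
      Chunk4.card_B]
  have hlen := height_top_eq_finrank m hres (n + 1)
    ((MvPowerSeries (Fin d ⊕ Fin l) K ⧸ J) ⧸ m ^ (n + 1)) hann
  rw [moduleLength, hlen, hfr]
end

section
/- Let R = K[[x]] be the formal power series ring over a field K, with maximal ideal m = (x), and let M = R ⊕ K, where K = R/m is viewed as an R-module. Then ℓ_R(M/xM) = 2, and for every n ≥ 0, ℓ_R((x^{n+1}M :_M m)/x^{n+1}M) = 2; in particular the irreducible multiplicity f⁰_{(x)}(M) = 2 equals ℓ_R(M/xM), yet M is not a Cohen–Macaulay R-module (so M is not an Ulrich R-module). -/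
set_option synthInstance.maxHeartbeats 1000000
set_option maxHeartbeats 1000000

open IsLocalRing Submodule

/-- The minimal number of generators of a module. -/
noncomputable def muGen (R M : Type*) [Ring R] [AddCommGroup M] [Module R M] : ℕ :=
  sInf {n | ∃ s : Finset M, s.card = n ∧ Submodule.span R (s : Set M) = ⊤}

/-- The depth of a module over a local ring: the supremum of lengths of `M`-regular
sequences consisting of elements of the maximal ideal. -/
noncomputable def depthM (R M : Type*) [CommRing R] [IsLocalRing R]
    [AddCommGroup M] [Module R M] : ℕ :=
  sSup {n | ∃ rs : List R, rs.length = n ∧ (∀ r ∈ rs, r ∈ maximalIdeal R) ∧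
    RingTheory.Sequence.IsRegular M rs}

/-- `Q` is a parameter ideal of `M` (of dimension `t`): it is generated by `t` elements of
the maximal ideal and `M/QM` has finite length. -/
def IsParameterIdeal (R M : Type*) [CommRing R] [IsLocalRing R]
    [AddCommGroup M] [Module R M] (t : ℕ) (Q : Ideal R) : Prop :=
  Q ≤ maximalIdeal R ∧ ∃ s : Finset R, s.card = t ∧ Q = Ideal.span (s : Set R) ∧
    moduleLength R (M ⧸ (Q • ⊤ : Submodule R M)) ≠ ⊤

/-! ### Auxiliary lemmas -/

/-- module length is invariant under linear equivalence. -/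
private lemma moduleLength_congr {R M N : Type*} [CommRing R] [AddCommGroup M] [Module R M]
    [AddCommGroup N] [Module R N] (e : M ≃ₗ[R] N) : moduleLength R M = moduleLength R N := by
  have h := Order.height_orderIso (Submodule.orderIsoMapComap e) ⊤
  have htop : (Submodule.orderIsoMapComap e) ⊤ = ⊤ := by
    simp [Submodule.orderIsoMapComap, Submodule.orderIsoMapComapOfBijective,
      Submodule.map_top, LinearMap.range_eq_top]
  rw [moduleLength, moduleLength, ← h, htop]

private lemma ltSeries_length_le_finrank {K V : Type*} [Field K] [AddCommGroup V] [Module K V]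
    [FiniteDimensional K V] (p : LTSeries (Submodule K V)) :
    p.length ≤ Module.finrank K V := by
  have h : ∀ i : Fin (p.length + 1), (i : ℕ) ≤ Module.finrank K (p i) := by
    intro i
    induction i using Fin.induction with
    | zero => simp
    | succ j ih =>
      have hlt := Submodule.finrank_lt_finrank_of_lt (p.step j)
      have h2 : (j.castSucc : ℕ) ≤ Module.finrank K (p j.castSucc) := ih
      simp only [Fin.coe_castSucc] at h2
      simp only [Fin.val_succ]
      omega
  have h2 := h (Fin.last _)
  simp only [Fin.val_last] at h2
  exact h2.trans (Submodule.finrank_le _)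

/-- A chain `⊥ < N < ⊤` gives height at least two. -/
private lemma two_le_height {R M : Type*} [CommRing R] [AddCommGroup M] [Module R M]
    (N : Submodule R M) (h1 : ⊥ < N) (h2 : N < ⊤) :
    (2 : ℕ∞) ≤ Order.height (⊤ : Submodule R M) := by
  let p : LTSeries (Submodule R M) :=
    { length := 2
      toFun := ![⊥, N, ⊤]
      step := by
        intro i
        fin_cases i
        · simpa using h1
        · simpa using h2 }
  have hlast : p.last = ⊤ := rfl
  have := Order.length_le_height_last (p := p)
  rw [hlast] at this
  exact this

section PS

variable {K : Type*} [Field K]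

open PowerSeries

private lemma span_X_ne_top : Ideal.span {(X : PowerSeries K)} ≠ ⊤ := by
  rw [← PowerSeries.maximalIdeal_eq_span_X]
  exact Ideal.IsMaximal.ne_top (IsLocalRing.maximalIdeal.isMaximal _)

private lemma nontrivialQ : Nontrivial (PowerSeries K ⧸ Ideal.span {(X : PowerSeries K)}) :=
  Ideal.Quotient.nontrivial_iff.mpr span_X_ne_top

private lemma smul_Q_eq_zero {r : PowerSeries K} (hr : r ∈ Ideal.span {(X : PowerSeries K)})
    (q : PowerSeries K ⧸ Ideal.span {(X : PowerSeries K)}) : r • q = 0 := by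
  obtain ⟨a, rfl⟩ := Submodule.Quotient.mk_surjective _ q
  have : r • (a : PowerSeries K) = r * a := rfl
  rw [← Submodule.Quotient.mk_smul, this, Submodule.Quotient.mk_eq_zero]
  exact Ideal.mul_mem_right a _ hr

private lemma exists_smul_one : ∀ q : PowerSeries K ⧸ Ideal.span {(X : PowerSeries K)},
    ∃ c : K, c • (1 : PowerSeries K ⧸ Ideal.span {(X : PowerSeries K)}) = q := by
  intro q
  obtain ⟨f, rfl⟩ := Submodule.Quotient.mk_surjective _ q
  refine ⟨PowerSeries.constantCoeff (R := K) f, ?_⟩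
  have h1 : (PowerSeries.constantCoeff (R := K) f) • (1 : PowerSeries K ⧸ Ideal.span {(X : PowerSeries K)})
      = Submodule.Quotient.mk (PowerSeries.C (R := K) (PowerSeries.constantCoeff (R := K) f)) := by
    have : ((PowerSeries.C (R := K) (PowerSeries.constantCoeff (R := K) f)) :
        PowerSeries K) • ((1 : PowerSeries K) : PowerSeries K) = PowerSeries.C (R := K)
        (PowerSeries.constantCoeff (R := K) f) * 1 := rfl
    rw [show ((PowerSeries.constantCoeff (R := K) f) • (1 : PowerSeries K ⧸ Ideal.span {(X : PowerSeries K)}))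
      = Submodule.Quotient.mk ((PowerSeries.constantCoeff (R := K) f) • (1 : PowerSeries K)) from rfl]
    congr 1
    rw [smul_eq_C_mul, mul_one]
  rw [h1, Submodule.Quotient.eq]
  rw [show (Ideal.span {(X : PowerSeries K)} : Submodule (PowerSeries K) (PowerSeries K))
    = Ideal.span {(X : PowerSeries K)} from rfl]
  rw [Ideal.mem_span_singleton, PowerSeries.X_dvd_iff]
  simp

private lemma finiteQ : Module.Finite K (PowerSeries K ⧸ Ideal.span {(X : PowerSeries K)}) := by
  apply Module.Finite.of_surjective
    (LinearMap.toSpanSingleton K _ (1 : PowerSeries K ⧸ Ideal.span {(X : PowerSeries K)}))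
  intro q
  obtain ⟨c, hc⟩ := exists_smul_one q
  exact ⟨c, hc⟩

private lemma finrankQ :
    Module.finrank K (PowerSeries K ⧸ Ideal.span {(X : PowerSeries K)}) = 1 := by
  have := nontrivialQ (K := K)
  exact finrank_eq_one 1 one_ne_zero exists_smul_one

/-- The length of `Q × Q` over `R = K⟦X⟧` is `2`. -/
private lemma lenQQ :
    moduleLength (PowerSeries K)
      ((PowerSeries K ⧸ Ideal.span {(X : PowerSeries K)}) ×
        (PowerSeries K ⧸ Ideal.span {(X : PowerSeries K)})) = 2 := by
  have hQnt := nontrivialQ (K := K)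
  have hfin := finiteQ (K := K)
  set Q := PowerSeries K ⧸ Ideal.span {(X : PowerSeries K)} with hQ
  have hfr : Module.finrank K (Q × Q) = 2 := by
    rw [Module.finrank_prod, finrankQ]
  apply le_antisymm
  · apply Order.height_le
    intro p _
    have hlen := ltSeries_length_le_finrank
      (p.map (Submodule.restrictScalarsEmbedding K (PowerSeries K) (Q × Q))
        (Submodule.restrictScalarsEmbedding K (PowerSeries K) (Q × Q)).strictMono)
    simp only [RelSeries.map_length] at hlen
    rw [hfr] at hlen
    exact_mod_cast hlen
  · exact two_le_height ((⊥ : Submodule (PowerSeries K) Q).prod ⊤)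
      (by
        rw [bot_lt_iff_ne_bot]
        intro h
        have : ((0 : Q), (1 : Q)) ∈ (⊥ : Submodule (PowerSeries K) Q).prod ⊤ := by
          simp [Submodule.mem_prod]
        rw [h, Submodule.mem_bot] at this
        exact one_ne_zero (congrArg Prod.snd this))
      (by
        rw [lt_top_iff_ne_top]
        intro h
        have : ((1 : Q), (0 : Q)) ∈ (⊥ : Submodule (PowerSeries K) Q).prod ⊤ := by
          rw [h]; trivial
        exact one_ne_zero ((Submodule.mem_prod.mp this).1))

end PS

section PS2

variable {K : Type*} [Field K]

open PowerSeries

/-- smul of an ideal on top of a product. -/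
private lemma smul_top_prod {R A B : Type*} [CommRing R] [AddCommGroup A] [Module R A]
    [AddCommGroup B] [Module R B] (I : Ideal R) :
    (I • ⊤ : Submodule R (A × B)) =
      (I • ⊤ : Submodule R A).prod (I • ⊤ : Submodule R B) := by
  apply le_antisymm
  · apply Submodule.smul_le.mpr
    intro r hr x _
    exact Submodule.mem_prod.mpr
      ⟨Submodule.smul_mem_smul hr Submodule.mem_top,
       Submodule.smul_mem_smul hr Submodule.mem_top⟩
  · rintro ⟨a, b⟩ hab
    obtain ⟨ha, hb⟩ := Submodule.mem_prod.mp hab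
    have h1 : ((a, 0) : A × B) ∈ (I • ⊤ : Submodule R (A × B)) := by
      have := Submodule.mem_map_of_mem (f := LinearMap.inl R A B) ha
      rw [Submodule.map_smul''] at this
      exact (smul_mono_right _ le_top : _ ≤ I • (⊤ : Submodule R (A × B))) this
    have h2 : ((0, b) : A × B) ∈ (I • ⊤ : Submodule R (A × B)) := by
      have := Submodule.mem_map_of_mem (f := LinearMap.inr R A B) hb
      rw [Submodule.map_smul''] at this
      exact (smul_mono_right _ le_top : _ ≤ I • (⊤ : Submodule R (A × B))) this
    have := Submodule.add_mem _ h1 h2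
    simpa using this

private lemma smul_top_self {R : Type*} [CommRing R] (I : Ideal R) :
    (I • ⊤ : Submodule R R) = I := by
  apply le_antisymm
  · apply Submodule.smul_le.mpr
    intro r hr x _
    exact I.mul_mem_right x hr
  · intro a ha
    have := Submodule.smul_mem_smul ha (Submodule.mem_top (x := (1 : R)))
    simpa using this

private lemma smul_top_Q {I : Ideal (PowerSeries K)} (hI : I ≤ Ideal.span {(X : PowerSeries K)}) :
    (I • ⊤ : Submodule (PowerSeries K) (PowerSeries K ⧸ Ideal.span {(X : PowerSeries K)})) = ⊥ := by
  rw [eq_bot_iff]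
  apply Submodule.smul_le.mpr
  intro r hr q _
  rw [Submodule.mem_bot, smul_Q_eq_zero (hI hr) q]

end PS2

section PS3

variable {K : Type*} [Field K]

open PowerSeries

private noncomputable def piMap :
    (PowerSeries K × (PowerSeries K ⧸ Ideal.span {(X : PowerSeries K)})) →ₗ[PowerSeries K]
      ((PowerSeries K ⧸ Ideal.span {(X : PowerSeries K)}) ×
        (PowerSeries K ⧸ Ideal.span {(X : PowerSeries K)})) :=
  LinearMap.prodMap (Submodule.mkQ (Ideal.span {(X : PowerSeries K)})) LinearMap.id

private lemma ker_pi :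
    LinearMap.ker (piMap (K := K)) = Submodule.prod (Ideal.span {(X : PowerSeries K)}) ⊥ := by
  rw [piMap, LinearMap.ker_prodMap, Submodule.ker_mkQ, LinearMap.ker_id]

private lemma surj_pi : Function.Surjective (piMap (K := K)) := by
  rintro ⟨q1, q2⟩
  obtain ⟨a, rfl⟩ := Submodule.Quotient.mk_surjective _ q1
  exact ⟨(a, q2), rfl⟩

private lemma X_ne_zero' : (X : PowerSeries K) ≠ 0 := X_ne_zero

private lemma colon_eq (n : ℕ) :
    ((Submodule.prod (Ideal.span {(X : PowerSeries K) ^ (n + 1)})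
        (⊥ : Submodule (PowerSeries K) (PowerSeries K ⧸ Ideal.span {(X : PowerSeries K)}))).colonBy
      (Ideal.span {(X : PowerSeries K)}))
    = Submodule.prod (Ideal.span {(X : PowerSeries K) ^ n}) ⊤ := by
  ext z
  have hmem : z ∈ ((Submodule.prod (Ideal.span {(X : PowerSeries K) ^ (n + 1)})
        (⊥ : Submodule (PowerSeries K) (PowerSeries K ⧸ Ideal.span {(X : PowerSeries K)}))).colonBy
      (Ideal.span {(X : PowerSeries K)})) ↔ ∀ r ∈ Ideal.span {(X : PowerSeries K)},
        r • z ∈ Submodule.prod (Ideal.span {(X : PowerSeries K) ^ (n + 1)})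
          (⊥ : Submodule (PowerSeries K) (PowerSeries K ⧸ Ideal.span {(X : PowerSeries K)})) :=
    Iff.rfl
  rw [hmem, Submodule.mem_prod]
  constructor
  · intro h
    have hX := h X (Ideal.subset_span rfl)
    rw [Submodule.mem_prod] at hX
    obtain ⟨h1, -⟩ := hX
    constructor
    · rw [Ideal.mem_span_singleton] at h1 ⊢
      have : (X : PowerSeries K) • z.1 = X * z.1 := rfl
      rw [Prod.smul_fst, this] at h1
      rw [pow_succ'] at h1
      exact (mul_dvd_mul_iff_left X_ne_zero').mp h1
    · trivial
  · rintro ⟨ha, -⟩ r hr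
    rw [Submodule.mem_prod, Prod.smul_fst, Prod.smul_snd]
    constructor
    · rw [Ideal.mem_span_singleton] at ha hr ⊢
      obtain ⟨c, rfl⟩ := hr
      obtain ⟨d, hd⟩ := ha
      have hsm : (X * c : PowerSeries K) • z.1 = X * c * z.1 := rfl
      rw [hsm, hd]
      exact ⟨c * d, by ring⟩
    · rw [smul_Q_eq_zero hr z.2]
      exact Submodule.zero_mem _

private noncomputable def phiMap (n : ℕ) :
    (PowerSeries K × (PowerSeries K ⧸ Ideal.span {(X : PowerSeries K)})) →ₗ[PowerSeries K]
      ((PowerSeries K × (PowerSeries K ⧸ Ideal.span {(X : PowerSeries K)})) ⧸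
        (Submodule.prod (Ideal.span {(X : PowerSeries K) ^ (n + 1)})
          (⊥ : Submodule (PowerSeries K) (PowerSeries K ⧸ Ideal.span {(X : PowerSeries K)})))) :=
  (Submodule.mkQ _).comp
    (LinearMap.prodMap ((X : PowerSeries K) ^ n • LinearMap.id) LinearMap.id)

private lemma ker_phi (n : ℕ) :
    LinearMap.ker (phiMap (K := K) n) = Submodule.prod (Ideal.span {(X : PowerSeries K)}) ⊥ := by
  rw [phiMap, LinearMap.ker_comp, Submodule.ker_mkQ]
  ext z
  rw [Submodule.mem_comap, Submodule.mem_prod, Submodule.mem_prod]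
  have h1 : ((LinearMap.prodMap ((X : PowerSeries K) ^ n • (LinearMap.id : PowerSeries K →ₗ[PowerSeries K] PowerSeries K)) (LinearMap.id : (PowerSeries K ⧸ Ideal.span {(X : PowerSeries K)}) →ₗ[PowerSeries K] (PowerSeries K ⧸ Ideal.span {(X : PowerSeries K)}))) z).1
      = X ^ n * z.1 := by
    simp [LinearMap.prodMap_apply, smul_eq_mul]
  have h2 : ((LinearMap.prodMap ((X : PowerSeries K) ^ n • (LinearMap.id : PowerSeries K →ₗ[PowerSeries K] PowerSeries K)) (LinearMap.id : (PowerSeries K ⧸ Ideal.span {(X : PowerSeries K)}) →ₗ[PowerSeries K] (PowerSeries K ⧸ Ideal.span {(X : PowerSeries K)}))) z).2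
      = z.2 := rfl
  rw [h1, h2, Ideal.mem_span_singleton, Ideal.mem_span_singleton, pow_succ]
  rw [mul_dvd_mul_iff_left (pow_ne_zero n (X_ne_zero' (K := K)))]

private lemma range_phi (n : ℕ) :
    LinearMap.range (phiMap (K := K) n) =
      Submodule.map (Submodule.mkQ (Submodule.prod (Ideal.span {(X : PowerSeries K) ^ (n + 1)})
          (⊥ : Submodule (PowerSeries K) (PowerSeries K ⧸ Ideal.span {(X : PowerSeries K)}))))
        (Submodule.prod (Ideal.span {(X : PowerSeries K) ^ n}) ⊤) := by
  rw [phiMap, LinearMap.range_comp]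
  congr 1
  ext y
  rw [LinearMap.mem_range, Submodule.mem_prod]
  constructor
  · rintro ⟨z, rfl⟩
    constructor
    · have : ((LinearMap.prodMap ((X : PowerSeries K) ^ n • (LinearMap.id : PowerSeries K →ₗ[PowerSeries K] PowerSeries K)) (LinearMap.id : (PowerSeries K ⧸ Ideal.span {(X : PowerSeries K)}) →ₗ[PowerSeries K] (PowerSeries K ⧸ Ideal.span {(X : PowerSeries K)}))) z).1
        = X ^ n * z.1 := by simp [LinearMap.prodMap_apply, smul_eq_mul]
      rw [this, Ideal.mem_span_singleton]
      exact ⟨z.1, rfl⟩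
    · trivial
  · rintro ⟨h1, -⟩
    rw [Ideal.mem_span_singleton] at h1
    obtain ⟨c, hc⟩ := h1
    obtain ⟨y1, y2⟩ := y
    simp only at hc
    subst hc
    refine ⟨(c, y2), ?_⟩
    simp [LinearMap.prodMap_apply, smul_eq_mul]

end PS3

section PS4

variable {K : Type*} [Field K]

open PowerSeries

private lemma krullDim_PS : ringKrullDim (PowerSeries K) = 1 := by
  apply le_antisymm
  · rw [ringKrullDim, Order.krullDim]
    apply iSup_le
    intro p
    by_contra hle
    push_neg at hle
    have h2 : 2 ≤ p.length := by
      by_contra h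
      push_neg at h
      interval_cases hl : p.length <;> simp_all <;> norm_num at hle
    have h01 : p ⟨0, by omega⟩ < p ⟨1, by omega⟩ := p.strictMono (by simp [Fin.lt_def])
    have h12 : p ⟨1, by omega⟩ < p ⟨2, by omega⟩ := p.strictMono (by simp [Fin.lt_def])
    have h12' : (p ⟨1, by omega⟩).asIdeal < (p ⟨2, by omega⟩).asIdeal :=
      (PrimeSpectrum.asIdeal_lt_asIdeal _ _).mpr h12
    have h01' : (p ⟨0, by omega⟩).asIdeal < (p ⟨1, by omega⟩).asIdeal :=
      (PrimeSpectrum.asIdeal_lt_asIdeal _ _).mpr h01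
    have hbot : (p ⟨1, by omega⟩).asIdeal ≠ ⊥ := by
      intro h
      rw [h] at h01'
      exact not_lt_bot h01'
    have hmax : (p ⟨1, by omega⟩).asIdeal.IsMaximal :=
      Ideal.IsPrime.isMaximal (p ⟨1, by omega⟩).isPrime hbot
    exact h12'.ne (hmax.eq_of_le (p ⟨2, by omega⟩).isPrime.ne_top h12'.le)
  · have hlt : (⟨⊥, Ideal.bot_prime⟩ : PrimeSpectrum (PowerSeries K)) <
        ⟨IsLocalRing.maximalIdeal (PowerSeries K),
          (IsLocalRing.maximalIdeal.isMaximal _).isPrime⟩ := by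
      rw [← PrimeSpectrum.asIdeal_lt_asIdeal]
      refine bot_lt_iff_ne_bot.mpr ?_
      intro h
      have hX : (X : PowerSeries K) ∈ IsLocalRing.maximalIdeal (PowerSeries K) := by
        rw [PowerSeries.maximalIdeal_eq_span_X]
        exact Ideal.subset_span rfl
      have h' : IsLocalRing.maximalIdeal (PowerSeries K) = ⊥ := h
      rw [h'] at hX
      exact X_ne_zero' (Ideal.mem_bot.mp hX)
    let q : LTSeries (PrimeSpectrum (PowerSeries K)) :=
      { length := 1
        toFun := ![⟨⊥, Ideal.bot_prime⟩,
          ⟨IsLocalRing.maximalIdeal (PowerSeries K),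
            (IsLocalRing.maximalIdeal.isMaximal _).isPrime⟩]
        step := by
          intro i
          fin_cases i
          simpa using hlt }
    have := Order.LTSeries.length_le_krullDim q
    exact_mod_cast this

end PS4

section PS5

variable {K : Type*} [Field K]

open PowerSeries

private lemma depth_PS :
    depthM (PowerSeries K)
      (PowerSeries K × (PowerSeries K ⧸ Ideal.span {(X : PowerSeries K)})) = 0 := by
  have hQnt := nontrivialQ (K := K)
  have hset : {n | ∃ rs : List (PowerSeries K), rs.length = n ∧
      (∀ r ∈ rs, r ∈ maximalIdeal (PowerSeries K)) ∧
      RingTheory.Sequence.IsRegular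
        (PowerSeries K × (PowerSeries K ⧸ Ideal.span {(X : PowerSeries K)})) rs} = {0} := by
    ext n
    simp only [Set.mem_setOf_eq, Set.mem_singleton_iff]
    constructor
    · rintro ⟨rs, hlen, hmem, hreg⟩
      match rs, hlen with
      | [], hlen => exact hlen.symm
      | r :: rs', hlen =>
        exfalso
        have hwr := hreg.toIsWeaklyRegular
        rw [RingTheory.Sequence.isWeaklyRegular_cons_iff] at hwr
        have hsr : IsSMulRegular
            (PowerSeries K × (PowerSeries K ⧸ Ideal.span {(X : PowerSeries K)})) r := hwr.1
        have hr : r ∈ Ideal.span {(X : PowerSeries K)} := by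
          rw [← PowerSeries.maximalIdeal_eq_span_X]
          exact hmem r (List.mem_cons_self)
        have hz : r • ((0 : PowerSeries K),
            (1 : PowerSeries K ⧸ Ideal.span {(X : PowerSeries K)})) = 0 := by
          rw [Prod.smul_mk, smul_zero, smul_Q_eq_zero hr]
          rfl
        have h0 : r • ((0 : PowerSeries K),
            (1 : PowerSeries K ⧸ Ideal.span {(X : PowerSeries K)}))
            = r • ((0 : PowerSeries K),
            (0 : PowerSeries K ⧸ Ideal.span {(X : PowerSeries K)})) := by
          rw [hz]
          exact (smul_zero _).symm
        have := hsr h0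
        exact one_ne_zero (congrArg Prod.snd this)
    · rintro rfl
      refine ⟨[], rfl, by simp, ?_, ?_⟩
      · exact RingTheory.Sequence.IsWeaklyRegular.nil _ _
      · rw [Ideal.ofList_nil, bot_smul]
        exact (bot_ne_top).symm
  rw [depthM, hset, csSup_singleton]

private lemma ann_eq_bot :
    Module.annihilator (PowerSeries K)
      (PowerSeries K × (PowerSeries K ⧸ Ideal.span {(X : PowerSeries K)})) = ⊥ := by
  ext r
  rw [Module.mem_annihilator, Ideal.mem_bot]
  constructor
  · intro h
    have := h ((1 : PowerSeries K), 0)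
    have h1 : r • ((1 : PowerSeries K),
        (0 : PowerSeries K ⧸ Ideal.span {(X : PowerSeries K)})) = (r, 0) := by
      rw [Prod.smul_mk, smul_zero, smul_eq_mul, mul_one]
    rw [h1] at this
    exact congrArg Prod.fst this
  · rintro rfl
    intro m
    rw [zero_smul]

end PS5

/-- For `R = K⟦x⟧`, `𝔪 = (x)`, and `M = R ⊕ K`: `ℓ_R(M/xM) = 2`,
`ℓ_R((x^{n+1}M :_M 𝔪)/x^{n+1}M) = 2` for all `n`, so `f⁰_{(x)}(M) = ℓ_R(M/xM) = 2`,
yet `M` has dimension `1` and depth `≠ 1`, i.e. `M` is not Cohen–Macaulay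
(hence not Ulrich). -/
theorem statement16 {K : Type*} [Field K]
    (m : Ideal (PowerSeries K)) (hm : m = Ideal.span {(PowerSeries.X : PowerSeries K)}) :
    moduleLength (PowerSeries K)
        ((PowerSeries K × (PowerSeries K ⧸ Ideal.span {(PowerSeries.X : PowerSeries K)})) ⧸
          (m • ⊤ : Submodule (PowerSeries K)
            (PowerSeries K × (PowerSeries K ⧸ Ideal.span {(PowerSeries.X : PowerSeries K)}))))
      = 2 ∧
    (∀ n : ℕ,
      moduleLength (PowerSeries K)
          ↥(Submodule.map
              (m ^ (n + 1) • ⊤ : Submodule (PowerSeries K)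
                (PowerSeries K ×
                  (PowerSeries K ⧸ Ideal.span {(PowerSeries.X : PowerSeries K)}))).mkQ
              ((m ^ (n + 1) • ⊤ : Submodule (PowerSeries K)
                (PowerSeries K ×
                  (PowerSeries K ⧸ Ideal.span {(PowerSeries.X : PowerSeries K)}))).colonBy m))
        = 2) ∧
    ringKrullDim (PowerSeries K ⧸ Module.annihilator (PowerSeries K)
        (PowerSeries K × (PowerSeries K ⧸ Ideal.span {(PowerSeries.X : PowerSeries K)}))) = 1 ∧
    depthM (PowerSeries K)
        (PowerSeries K × (PowerSeries K ⧸ Ideal.span {(PowerSeries.X : PowerSeries K)})) ≠ 1 := by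
  subst hm
  refine ⟨?_, ?_, ?_, ?_⟩
  · have hS : ((Ideal.span {(PowerSeries.X : PowerSeries K)}) • ⊤ :
        Submodule (PowerSeries K)
          (PowerSeries K × (PowerSeries K ⧸ Ideal.span {(PowerSeries.X : PowerSeries K)})))
        = Submodule.prod (Ideal.span {(PowerSeries.X : PowerSeries K)}) ⊥ := by
      rw [smul_top_prod, smul_top_self, smul_top_Q le_rfl]
    rw [hS, ← ker_pi]
    exact (moduleLength_congr
      ((piMap (K := K)).quotKerEquivOfSurjective surj_pi)).trans lenQQ
  · intro n
    have hS : ((Ideal.span {(PowerSeries.X : PowerSeries K)}) ^ (n + 1) • ⊤ :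
        Submodule (PowerSeries K)
          (PowerSeries K × (PowerSeries K ⧸ Ideal.span {(PowerSeries.X : PowerSeries K)})))
        = Submodule.prod (Ideal.span {(PowerSeries.X : PowerSeries K) ^ (n + 1)}) ⊥ := by
      rw [Ideal.span_singleton_pow, smul_top_prod, smul_top_self, smul_top_Q]
      rw [Ideal.span_singleton_le_span_singleton]
      exact dvd_pow_self _ (Nat.succ_ne_zero n)
    rw [hS, colon_eq n, ← range_phi n]
    refine (moduleLength_congr ?_).trans lenQQ
    exact (LinearMap.quotKerEquivRange (phiMap (K := K) n)).symm.trans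
      ((Submodule.quotEquivOfEq _ _ ((ker_phi n).trans ker_pi.symm)).trans
        ((piMap (K := K)).quotKerEquivOfSurjective surj_pi))
  · rw [ann_eq_bot]
    exact (ringKrullDim_eq_of_ringEquiv (RingEquiv.quotientBot _)).trans krullDim_PS
  · rw [depth_PS]
    simp
end
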